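/- arXiv:1104.1408 — 4 statements merged into one kernel-verified Lean document; each statement's English description precedes it below -/
import Mathlib

section
/- Let v, u, g be natural numbers with v = u + g, g ≥ 1 and u ≥ 2. If w : Fin v → ZMod 2 is an end-around phased-burst error pattern of burst length u with error-free gap g, then the Hamming weight of w (the number of positions i with w i = 1) is at least ⌈(u−1)/g⌉ + 1. -/
/-- The Hamming weight of a binary word: the number of positions where it equals 1. -/
def wt {α : Type*} [Fintype α] (f : α → ZMod 2) : ℕ :=
  (Finset.univ.filter fun i => f i = 1).card

/-- Cyclic index: the position `(s + j) mod v` in `Fin v`. -/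
def cycIdx {v : ℕ} (s : Fin v) (j : ℕ) : Fin v :=
  ⟨(s.val + j) % v, Nat.mod_lt _ s.pos⟩

/-- `w : Fin v → ZMod 2` is an end-around phased-burst error of burst length `u`
with error-free gap `g = v - u` (where `1 ≤ g` and `2 ≤ u`): there is a position `s`
such that the gap `s, s+1, …, s+g-1` (cyclically) is identically zero, the burst of
length `u` occupying the complementary cyclic interval is bounded at both ends by ones
(`w (s-1) = 1` and `w (s+g) = 1`), and every run of consecutive (cyclic) zeros contained
in that complementary interval has length strictly less than `g`. -/
def IsEndAroundBurst (v u : ℕ) (w : Fin v → ZMod 2) : Prop :=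
  2 ≤ u ∧ u + 1 ≤ v ∧
  ∃ s : Fin v,
    (∀ j, j < v - u → w (cycIdx s j) = 0) ∧
    w (cycIdx s (v - 1)) = 1 ∧
    w (cycIdx s (v - u)) = 1 ∧
    (∀ a L, a + L ≤ u → (∀ j, j < L → w (cycIdx s (v - u + a + j)) = 0) → L < v - u)

/-!
Read the burst from its first position on: its ones sit at offsets `0 = p₀ < p₁ < ⋯ < pₖ = u - 1`,
and since every run of zeros inside the burst is shorter than `g`, consecutive ones are at
distance at most `g`. Hence `u - 1 ≤ k g`, and the burst alone carries `k + 1 ≥ ⌈(u-1)/g⌉ + 1` ones.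
-/

open Finset

theorem Finset.add_le_mul_card_filter_le_of_forall_exists_lt {S : Finset ℕ} {g : ℕ}
    (hS : ∀ m ∈ S, 0 < m → ∃ m' ∈ S, m' < m ∧ m ≤ m' + g) :
    ∀ m ∈ S, m + g ≤ g * #{x ∈ S | x ≤ m} := by
  intro m
  induction m using Nat.strong_induction_on with
  | _ m ih =>
  intro hm
  rcases Nat.eq_zero_or_pos m with rfl | hpos
  · have : 0 < #{x ∈ S | x ≤ 0} := card_pos.mpr ⟨0, by simp [hm]⟩
    simpa using Nat.le_mul_of_pos_right g this
  · obtain ⟨m', hm'S, hm'm, hgap⟩ := hS m hm hpos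
    have hsub : insert m {x ∈ S | x ≤ m'} ⊆ {x ∈ S | x ≤ m} := by
      intro x hx
      simp only [mem_insert, mem_filter] at hx ⊢
      rcases hx with rfl | ⟨hxS, hxm'⟩
      · exact ⟨hm, le_rfl⟩
      · exact ⟨hxS, by omega⟩
    have hnew : m ∉ {x ∈ S | x ≤ m'} := by
      simp only [mem_filter]
      omega
    have hcard : #{x ∈ S | x ≤ m'} + 1 ≤ #{x ∈ S | x ≤ m} := by
      rw [← card_insert_of_notMem hnew]
      exact card_le_card hsub
    calc m + g ≤ (m' + g) + g := by omega
      _ ≤ g * #{x ∈ S | x ≤ m'} + g := Nat.add_le_add_right (ih m' hm'm hm'S) g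
      _ = g * (#{x ∈ S | x ≤ m'} + 1) := by ring
      _ ≤ g * #{x ∈ S | x ≤ m} := Nat.mul_le_mul_left g hcard

theorem Finset.exists_lt_le_add_of_forall_exists_mem_Ico {S : Finset ℕ} {u g : ℕ}
    (h0 : 0 ∈ S) (hSu : ∀ x ∈ S, x < u)
    (hwindow : ∀ a, a + g ≤ u → ∃ x ∈ S, a ≤ x ∧ x < a + g) :
    ∀ m ∈ S, 0 < m → ∃ m' ∈ S, m' < m ∧ m ≤ m' + g := by
  intro m hm hpos
  by_cases hmg : m ≤ g
  · exact ⟨0, h0, hpos, by omega⟩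
  · obtain ⟨x, hx, hlo, hhi⟩ := hwindow (m - g) (by have := hSu m hm; omega)
    exact ⟨x, hx, by omega, by omega⟩

theorem cycIdx_injOn {v : ℕ} (s : Fin v) : Set.InjOn (cycIdx s) (Set.Iio v) := by
  intro i hi j hj h
  have hmod : i % v = j % v := Nat.ModEq.add_left_cancel' s.val (congrArg Fin.val h)
  rwa [Nat.mod_eq_of_lt hi, Nat.mod_eq_of_lt hj] at hmod

theorem ZMod.two_eq_one_of_ne_zero {x : ZMod 2} (hx : x ≠ 0) : x = 1 := by
  revert x
  decide

def burstOnes {v : ℕ} (w : Fin v → ZMod 2) (s : Fin v) (u : ℕ) : Finset ℕ :=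
  {j ∈ range u | w (cycIdx s (v - u + j)) = 1}

theorem card_burstOnes_le_wt {v u : ℕ} (hu : u ≤ v) (w : Fin v → ZMod 2) (s : Fin v) :
    #(burstOnes w s u) ≤ wt w := by
  refine card_le_card_of_injOn (fun j => cycIdx s (v - u + j)) ?_ ?_
  · intro j hj
    simp only [burstOnes, coe_filter, mem_range, Set.mem_ofPred_eq] at hj
    simp [hj.2]
  · intro i hi j hj hij
    simp only [burstOnes, coe_filter, mem_range, Set.mem_ofPred_eq] at hi hj
    have := cycIdx_injOn s (Set.mem_Iio.mpr (by omega)) (Set.mem_Iio.mpr (by omega)) hij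
    omega

theorem IsEndAroundBurst.add_le_mul_card_burstOnes {v u : ℕ} {w : Fin v → ZMod 2}
    (hw : IsEndAroundBurst v u w) :
    ∃ s : Fin v, u - 1 + (v - u) ≤ (v - u) * #(burstOnes w s u) := by
  obtain ⟨hu, huv, s, -, hlast, hfirst, hrun⟩ := hw
  have hlt : ∀ x ∈ burstOnes w s u, x < u := fun x hx => mem_range.mp (mem_filter.mp hx).1
  refine ⟨s, ?_⟩
  rw [← filter_true_of_mem (p := (· ≤ u - 1)) fun x hx => Nat.le_pred_of_lt (hlt x hx)]
  refine add_le_mul_card_filter_le_of_forall_exists_lt ?_ (u - 1) ?_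
  · refine exists_lt_le_add_of_forall_exists_mem_Ico (u := u) ?_ ?_ ?_
    · simp only [burstOnes, mem_filter, mem_range, add_zero]
      exact ⟨by omega, hfirst⟩
    · exact hlt
    · intro a ha
      by_contra! hzero
      refine (hrun a (v - u) ha fun j hj => ?_).false
      by_contra hne
      have hmem : a + j ∈ burstOnes w s u := by
        simp only [burstOnes, mem_filter, mem_range, ← add_assoc]
        exact ⟨by omega, ZMod.two_eq_one_of_ne_zero hne⟩
      have := hzero (a + j) hmem (by omega)
      omega
  · simp only [burstOnes, mem_filter, mem_range]
    exact ⟨by omega, by rwa [show v - u + (u - 1) = v - 1 by omega]⟩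

theorem stmt0_general (v u g : ℕ) (hv : v = u + g)
    (w : Fin v → ZMod 2) (hw : IsEndAroundBurst v u w) :
    ⌈((u : ℚ) - 1) / (g : ℚ)⌉ + 1 ≤ (wt w : ℤ) := by
  have hgap : v - u = g := by omega
  have hg : 0 < g := by have := hw.2.1; omega
  have hu : 1 ≤ u := by have := hw.1; omega
  obtain ⟨s, hcount⟩ := hw.add_le_mul_card_burstOnes
  have hbound : u - 1 + g ≤ g * wt w := by
    rw [hgap] at hcount
    exact hcount.trans (Nat.mul_le_mul_left g (card_burstOnes_le_wt (by omega) w s))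
  have hceil : ⌈((u : ℚ) - 1) / g⌉ ≤ (wt w : ℤ) - 1 := by
    rw [Int.ceil_le, div_le_iff₀ (by exact_mod_cast hg)]
    have : ((u - 1 + g : ℕ) : ℚ) ≤ ((g * wt w : ℕ) : ℚ) := by exact_mod_cast hbound
    push_cast [Nat.cast_sub hu] at this ⊢
    linarith
  omega

/-- If `w : Fin v → ZMod 2` with `v = u + g`, `g ≥ 1`, `u ≥ 2` is an end-around
phased-burst error pattern of burst length `u` with error-free gap `g`, then the
Hamming weight of `w` is at least `⌈(u-1)/g⌉ + 1`. -/
theorem stmt0 (v u g : ℕ) (hv : v = u + g) (hg : 1 ≤ g) (hu : 2 ≤ u)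
    (w : Fin v → ZMod 2) (hw : IsEndAroundBurst v u w) :
    ⌈((u : ℚ) - 1) / (g : ℚ)⌉ + 1 ≤ (wt w : ℤ) :=
  stmt0_general v u g hv w hw
end

section
/- For natural numbers c, d, e, the number of binary words f : Fin c → ZMod 2 of Hamming weight exactly d that contain no run of e+1 consecutive zeros (i.e., for every index i with i + e < c there exists 0 ≤ j ≤ e with f(i+j) = 1) is equal, as an integer, to Σ_{j ∈ J} (−1)^j · C(d+1, j) · C(c − j(e+1), d), where J = { j : 0 ≤ j ≤ d+1 and c − j(e+1) ≥ 0 } and C(·,·) denotes the binomial coefficient. -/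
/-- `f : Fin c → ZMod 2` contains no run of `e + 1` consecutive zeros:
for every index `i` with `i + e < c` there exists `0 ≤ j ≤ e` with `f (i + j) = 1`. -/
def NoZeroRun (c e : ℕ) (f : Fin c → ZMod 2) : Prop :=
  ∀ i : ℕ, ∀ _h : i + e < c, ∃ j : Fin (e + 1),
    f ⟨i + j.val, by have := j.isLt; omega⟩ = 1

open Finset

namespace Finset.Nat

theorem card_antidiagonalTuple_succ (k n : ℕ) :
    #(antidiagonalTuple (k + 1) n) = (k + n).choose k := by
  rw [← piAntidiag_univ_fin_eq_antidiagonalTuple, ← map_sym_eq_piAntidiag, card_map, sym_univ,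
    card_univ, Sym.card_sym_eq_choose, Fintype.card_fin, add_right_comm, Nat.add_sub_cancel,
    Nat.choose_symm_add]

theorem card_filter_le_antidiagonalTuple (k n : ℕ) (v : Fin k → ℕ) :
    #{g ∈ antidiagonalTuple k n | ∀ i, v i ≤ g i} =
      if ∑ i, v i ≤ n then #(antidiagonalTuple k (n - ∑ i, v i)) else 0 := by
  split_ifs with hv
  · refine card_nbij' (· - v) (· + v) (fun g hg => ?_) (fun g hg => ?_) (fun g hg => ?_)
      (fun g _ => add_tsub_cancel_right g v)
    all_goals simp only [mem_coe, mem_filter, mem_antidiagonalTuple] at hg ⊢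
    · rw [Pi.sub_def, sum_tsub_distrib _ fun i _ => hg.2 i, hg.1]
    · refine ⟨?_, fun i => le_add_self⟩
      rw [Pi.add_def, sum_add_distrib, hg]
      omega
    · exact tsub_add_cancel_of_le hg.2
  · refine card_eq_zero.2 <| filter_eq_empty_iff.2 fun g hg hvg => hv ?_
    rw [mem_antidiagonalTuple] at hg
    exact hg ▸ sum_le_sum fun i _ => hvg i

end Finset.Nat

open Finset.Nat

def boundedAntidiagonalTuple (k n e : ℕ) : Finset (Fin k → ℕ) :=
  {g ∈ antidiagonalTuple k n | ∀ i, g i ≤ e}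

theorem card_boundedAntidiagonalTuple_one (n e : ℕ) :
    #(boundedAntidiagonalTuple 1 n e) = if n ≤ e then 1 else 0 := by
  rw [boundedAntidiagonalTuple, antidiagonalTuple_one, filter_singleton]
  split_ifs <;> simp_all

theorem card_boundedAntidiagonalTuple_succ (k n e : ℕ) :
    #(boundedAntidiagonalTuple (k + 1) n e) =
      ∑ t ∈ range (min (e + 1) (n + 1)), #(boundedAntidiagonalTuple k (n - t) e) := by
  unfold boundedAntidiagonalTuple
  rw [card_eq_sum_card_fiberwise (f := (· 0)) fun g hg => ?_]
  · refine sum_congr rfl fun t ht => card_nbij' Fin.tail (fun g => Fin.cons t g)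
      (fun g hg => ?_) (fun g hg => ?_) (fun g hg => ?_) (fun g _ => by simp)
    all_goals simp only [mem_coe, mem_filter, mem_antidiagonalTuple, Fin.sum_univ_succ,
      Fin.forall_fin_succ, mem_range, lt_min_iff] at hg ht ⊢
    · simp only [Fin.tail]
      exact ⟨by omega, hg.1.2.2⟩
    · simp only [Fin.cons_zero, Fin.cons_succ]
      exact ⟨⟨by omega, by omega, hg.2⟩, trivial⟩
    · rw [← hg.2, Fin.cons_self_tail]
  · simp only [mem_coe, mem_filter, mem_antidiagonalTuple, Fin.sum_univ_succ,
      Fin.forall_fin_succ, mem_range, lt_min_iff] at hg ⊢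
    omega

theorem card_boundedAntidiagonalTuple (k n e : ℕ) :
    (#(boundedAntidiagonalTuple k n e) : ℤ) =
      ∑ j ∈ range (k + 1) with j * (e + 1) ≤ n,
        (-1 : ℤ) ^ j * k.choose j * #(antidiagonalTuple k (n - j * (e + 1))) := by
  have inclusion_exclusion (g : Fin k → ℕ) : (if ∀ i, g i ≤ e then 1 else 0 : ℤ) =
      ∑ S ∈ univ.powerset, (-1) ^ #S * if ∀ i ∈ S, e + 1 ≤ g i then 1 else 0 := by
    have : {S ∈ (univ : Finset (Fin k)).powerset | ∀ i ∈ S, e + 1 ≤ g i} =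
        (univ.filter (e < g ·)).powerset := by
      ext S
      simp [subset_iff]
    simp_rw [mul_ite, mul_one, mul_zero]
    rw [← sum_filter, this, sum_powerset_neg_one_pow_card]
    simp [filter_eq_empty_iff]
  have card_shift (S : Finset (Fin k)) :
      #{g ∈ antidiagonalTuple k n | ∀ i ∈ S, e + 1 ≤ g i} =
        if #S * (e + 1) ≤ n then #(antidiagonalTuple k (n - #S * (e + 1))) else 0 := by
    have := card_filter_le_antidiagonalTuple k n (fun i => if i ∈ S then e + 1 else 0)
    rw [sum_ite_mem, univ_inter, sum_const, smul_eq_mul] at this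
    rw [← this]
    congr 1
    refine filter_congr fun g _ => ⟨fun h i => ?_, fun h i hi => by simpa [hi] using h i⟩
    split_ifs with hi
    exacts [h i hi, Nat.zero_le _]
  rw [boundedAntidiagonalTuple, natCast_card_filter, sum_congr rfl fun g _ => inclusion_exclusion g,
    sum_comm]
  simp_rw [← mul_sum, ← natCast_card_filter, card_shift]
  rw [sum_powerset_apply_card (fun j => (-1) ^ j * ((if j * (e + 1) ≤ n then
    #(antidiagonalTuple k (n - j * (e + 1))) else 0 : ℕ) : ℤ)), card_univ, Fintype.card_fin,
    sum_filter]
  refine sum_congr rfl fun j _ => ?_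
  rw [nsmul_eq_mul]
  split_ifs <;> push_cast <;> ring

theorem ZMod.two_eq_zero_of_ne_one {x : ZMod 2} (hx : x ≠ 1) : x = 0 := by
  fin_cases x
  · rfl
  · exact absurd rfl hx

section Weight

variable {α : Type*} [Fintype α]

theorem wt_le_card (f : α → ZMod 2) : wt f ≤ Fintype.card α :=
  card_filter_le _ _

theorem wt_eq_zero_iff {f : α → ZMod 2} : wt f = 0 ↔ f = 0 := by
  simp only [wt, card_eq_zero, filter_eq_empty_iff, mem_univ, true_imp_iff, funext_iff,
    Pi.zero_apply]
  exact forall_congr' fun _ => ⟨ZMod.two_eq_zero_of_ne_one, fun h => h ▸ zero_ne_one⟩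

end Weight

theorem noZeroRun_zero_iff {c e : ℕ} : NoZeroRun c e 0 ↔ c ≤ e := by
  refine ⟨fun h => ?_, fun h i hi => absurd hi (by omega)⟩
  by_contra! hce
  obtain ⟨j, hj⟩ := h 0 (by omega)
  exact zero_ne_one hj

/-- The word `0ᵗ 1 g`. -/
def prependZerosOne (c t : ℕ) (g : Fin (c - 1 - t) → ZMod 2) (p : Fin c) : ZMod 2 :=
  if h : t < p then g ⟨p - t - 1, by omega⟩ else if (p : ℕ) = t then 1 else 0

section PrependZerosOne

variable {c t : ℕ} (g : Fin (c - 1 - t) → ZMod 2)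

theorem prependZerosOne_apply_of_lt {q : ℕ} (hq : q < c) (hqt : q < t) :
    prependZerosOne c t g ⟨q, hq⟩ = 0 := by
  simp [prependZerosOne, hqt.not_gt, hqt.ne]

theorem prependZerosOne_apply_self (ht : t < c) : prependZerosOne c t g ⟨t, ht⟩ = 1 := by
  simp [prependZerosOne]

theorem prependZerosOne_apply_add (p : Fin (c - 1 - t)) :
    prependZerosOne c t g ⟨p + t + 1, by omega⟩ = g p := by
  simp only [prependZerosOne, dif_pos (by omega : t < p + t + 1)]
  congr
  omega

theorem prependZerosOne_injective : Function.Injective (prependZerosOne c t) := by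
  intro g g' h
  funext p
  rw [← prependZerosOne_apply_add g, ← prependZerosOne_apply_add g', h]

theorem prependZerosOne_ne_of_lt {t' : ℕ} (g' : Fin (c - 1 - t') → ZMod 2) (ht : t < c)
    (htt' : t < t') :
    prependZerosOne c t g ≠ prependZerosOne c t' g' := by
  intro h
  have := congrFun h ⟨t, ht⟩
  rw [prependZerosOne_apply_self, prependZerosOne_apply_of_lt _ _ htt'] at this
  exact one_ne_zero this

theorem wt_prependZerosOne (ht : t < c) : wt (prependZerosOne c t g) = wt g + 1 := by
  set shift : Fin (c - 1 - t) → Fin c := fun q => ⟨q + t + 1, by omega⟩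
  have hshift : shift.Injective := fun q q' h => by simpa [shift, Fin.ext_iff] using h
  have hsupp : univ.filter (prependZerosOne c t g · = 1) =
      insert ⟨t, ht⟩ ((univ.filter (g · = 1)).image shift) := by
    ext ⟨p, hp⟩
    simp only [mem_filter, mem_univ, true_and, mem_insert, mem_image, shift, Fin.ext_iff]
    rcases lt_trichotomy p t with hpt | rfl | htp
    · simp only [prependZerosOne_apply_of_lt _ _ hpt, zero_ne_one, false_iff, not_or]
      omega
    · simp [prependZerosOne_apply_self]
    · obtain ⟨q, rfl⟩ : ∃ q : Fin (c - 1 - t), (q : ℕ) + t + 1 = p :=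
        ⟨⟨p - t - 1, by omega⟩, by simp only; omega⟩
      simp [prependZerosOne_apply_add, ← Fin.ext_iff]
      omega
  rw [wt, hsupp, card_insert_of_notMem (by simp [shift, Fin.ext_iff]; omega),
    card_image_of_injective _ hshift, wt]

theorem le_of_noZeroRun_prependZerosOne {e : ℕ} (ht : t < c)
    (h : NoZeroRun c e (prependZerosOne c t g)) : t ≤ e := by
  by_contra! het
  obtain ⟨j, hj⟩ := h 0 (by omega)
  simp only [zero_add] at hj
  rw [prependZerosOne_apply_of_lt _ _ (by omega)] at hj
  exact zero_ne_one hj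

theorem noZeroRun_prependZerosOne_iff {e : ℕ} (ht : t < c) (hte : t ≤ e) :
    NoZeroRun c e (prependZerosOne c t g) ↔ NoZeroRun (c - 1 - t) e g := by
  constructor
  · intro h i hi
    obtain ⟨j, hj⟩ := h (i + t + 1) (by omega)
    refine ⟨j, ?_⟩
    rw [← prependZerosOne_apply_add g, ← hj]
    congr 2
    simp only
    omega
  · intro h i hi
    by_cases hit : i ≤ t
    · refine ⟨⟨t - i, by omega⟩, ?_⟩
      rw [← prependZerosOne_apply_self g ht]
      congr 2
      simp
      omega
    · obtain ⟨j, hj⟩ := h (i - t - 1) (by omega)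
      refine ⟨j, ?_⟩
      rw [← hj, ← prependZerosOne_apply_add g]
      congr 2
      simp only
      omega

end PrependZerosOne

theorem exists_eq_prependZerosOne {c : ℕ} {f : Fin c → ZMod 2} (hf : f ≠ 0) :
    ∃ t < c, ∃ g : Fin (c - 1 - t) → ZMod 2, f = prependZerosOne c t g := by
  have hex : ∃ t, ∃ ht : t < c, f ⟨t, ht⟩ = 1 := by
    by_contra! h
    exact hf (funext fun p => ZMod.two_eq_zero_of_ne_one (h p p.2))
  obtain ⟨ht, h1⟩ := Nat.find_spec hex
  refine ⟨Nat.find hex, ht, fun q => f ⟨q + Nat.find hex + 1, by omega⟩, funext fun ⟨p, hp⟩ => ?_⟩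
  rcases lt_trichotomy p (Nat.find hex) with hpt | rfl | htp
  · rw [prependZerosOne_apply_of_lt _ _ hpt]
    exact ZMod.two_eq_zero_of_ne_one fun h => Nat.find_min hex hpt ⟨hp, h⟩
  · rw [prependZerosOne_apply_self, h1]
  · obtain ⟨q, rfl⟩ : ∃ q : Fin (c - 1 - Nat.find hex), (q : ℕ) + Nat.find hex + 1 = p :=
      ⟨⟨p - Nat.find hex - 1, by omega⟩, by simp only; omega⟩
    rw [prependZerosOne_apply_add]

open Classical in
noncomputable def noZeroRunWords (c d e : ℕ) : Finset (Fin c → ZMod 2) :=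
  {f | wt f = d ∧ NoZeroRun c e f}

theorem card_noZeroRunWords_zero (c e : ℕ) :
    #(noZeroRunWords c 0 e) = if c ≤ e then 1 else 0 := by
  have : noZeroRunWords c 0 e = if c ≤ e then {0} else ∅ := by
    ext f
    simp only [noZeroRunWords, mem_filter, mem_univ, true_and, wt_eq_zero_iff]
    split_ifs with hce
    · rw [mem_singleton]
      exact ⟨And.left, fun hf => ⟨hf, hf ▸ noZeroRun_zero_iff.2 hce⟩⟩
    · simp only [notMem_empty, iff_false, not_and]
      exact fun hf => hf ▸ mt noZeroRun_zero_iff.1 hce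
  rw [this]
  split_ifs <;> rfl

theorem noZeroRunWords_succ (c d e : ℕ) :
    noZeroRunWords c (d + 1) e = (range (min (e + 1) (c - d))).biUnion
      fun t => (noZeroRunWords (c - 1 - t) d e).image (prependZerosOne c t) := by
  ext f
  simp only [noZeroRunWords, mem_filter, mem_univ, true_and, mem_biUnion, mem_range, lt_min_iff,
    mem_image]
  constructor
  · rintro ⟨hwt, hrun⟩
    obtain ⟨t, ht, g, rfl⟩ := exists_eq_prependZerosOne (f := f) fun hf => by
      rw [hf, wt_eq_zero_iff.2 rfl] at hwt
      omega
    have hte := le_of_noZeroRun_prependZerosOne g ht hrun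
    rw [wt_prependZerosOne g ht, add_left_inj] at hwt
    have hlen : d ≤ c - 1 - t := hwt ▸ (wt_le_card g).trans_eq (Fintype.card_fin _)
    exact ⟨t, ⟨by omega, by omega⟩, g, ⟨hwt, (noZeroRun_prependZerosOne_iff g ht hte).1 hrun⟩, rfl⟩
  · rintro ⟨t, ⟨hte, htc⟩, g, ⟨hwt, hrun⟩, rfl⟩
    exact ⟨by rw [wt_prependZerosOne g (by omega), hwt],
      (noZeroRun_prependZerosOne_iff g (by omega) (by omega)).2 hrun⟩

theorem card_noZeroRunWords_succ (c d e : ℕ) :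
    #(noZeroRunWords c (d + 1) e) =
      ∑ t ∈ range (min (e + 1) (c - d)), #(noZeroRunWords (c - 1 - t) d e) := by
  rw [noZeroRunWords_succ, card_biUnion]
  · exact sum_congr rfl fun t _ => card_image_of_injective _ prependZerosOne_injective
  · intro t ht t' ht' htt'
    simp only [coe_range, Set.mem_Iio, lt_min_iff] at ht ht'
    refine disjoint_left.2 fun f hf hf' => ?_
    simp only [mem_image] at hf hf'
    obtain ⟨g, -, rfl⟩ := hf
    obtain ⟨g', -, hgg'⟩ := hf'
    rcases htt'.lt_or_gt with h | h
    · exact prependZerosOne_ne_of_lt g g' (by omega) h hgg'.symm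
    · exact prependZerosOne_ne_of_lt g' g (by omega) h hgg'

theorem card_noZeroRunWords_add (d n e : ℕ) :
    #(noZeroRunWords (d + n) d e) = #(boundedAntidiagonalTuple (d + 1) n e) := by
  induction d generalizing n with
  | zero => rw [zero_add, card_noZeroRunWords_zero, card_boundedAntidiagonalTuple_one]
  | succ d ih =>
    rw [card_noZeroRunWords_succ, card_boundedAntidiagonalTuple_succ,
      show d + 1 + n - d = n + 1 by omega]
    refine sum_congr rfl fun t ht => ?_
    rw [mem_range, lt_min_iff] at ht
    rw [← ih, show d + 1 + n - 1 - t = d + (n - t) by omega]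

theorem card_noZeroRunWords (c d e : ℕ) :
    (#(noZeroRunWords c d e) : ℤ) =
      ∑ j ∈ range (d + 2) with j * (e + 1) ≤ c,
        (-1 : ℤ) ^ j * (d + 1).choose j * (c - j * (e + 1)).choose d := by
  rcases le_or_gt d c with hdc | hcd
  · obtain ⟨n, rfl⟩ := Nat.exists_eq_add_of_le hdc
    rw [card_noZeroRunWords_add, card_boundedAntidiagonalTuple, sum_filter, sum_filter]
    refine sum_congr rfl fun j _ => ?_
    split_ifs with hn hdn hdn
    · rw [card_antidiagonalTuple_succ, show d + n - j * (e + 1) = d + (n - j * (e + 1)) by omega]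
    · omega
    · rw [Nat.choose_eq_zero_of_lt (by omega : d + n - j * (e + 1) < d)]
      simp
    · rfl
  · have : noZeroRunWords c d e = ∅ := eq_empty_of_forall_notMem fun f hf => by
      simp only [noZeroRunWords, mem_filter, mem_univ, true_and] at hf
      simpa [hf.1, hcd.not_ge] using wt_le_card f
    rw [this, card_empty, Nat.cast_zero]
    refine (sum_eq_zero fun j _ => ?_).symm
    rw [Nat.choose_eq_zero_of_lt (by omega : c - j * (e + 1) < d)]
    simp

/-- The number of binary words `f : Fin c → ZMod 2` of Hamming weight exactly `d`
containing no run of `e + 1` consecutive zeros equals, as an integer,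
`Σ_{j ∈ J} (-1)^j · C(d+1, j) · C(c - j(e+1), d)` where
`J = { j : 0 ≤ j ≤ d + 1, c - j(e+1) ≥ 0 }`. -/
theorem stmt1 (c d e : ℕ) :
    (Nat.card {f : Fin c → ZMod 2 // wt f = d ∧ NoZeroRun c e f} : ℤ) =
      ∑ j ∈ (Finset.range (d + 2)).filter (fun j => j * (e + 1) ≤ c),
        (-1 : ℤ) ^ j * ((d + 1).choose j : ℤ) * (((c - j * (e + 1)).choose d : ℕ) : ℤ) := by
  classical
  rw [← card_noZeroRunWords, Nat.card_eq_fintype_card, Fintype.card_subtype, noZeroRunWords]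
end

section
/- Let v and u be natural numbers with 2 ≤ u ≤ v − 1. The number of binary words w : Fin v → ZMod 2 that are end-around phased-burst errors of burst length u' with error-free gap g = v − u', for some u' with 2 ≤ u' ≤ u, equals v · Σ_{x=0}^{u−2} Σ_{y=0}^{x} Σ_{z=0}^{v−x−3} F(x, y, z, v). -/
def Aform (c d e : ℕ) : ℤ :=
  ∑ j ∈ (Finset.range (d + 2)).filter (fun j => j * (e + 1) ≤ c),
    (-1 : ℤ) ^ j * ((d + 1).choose j : ℤ) * (((c - j * (e + 1)).choose d : ℕ) : ℤ)

def Bform (x y z : ℕ) : ℤ :=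
  Aform x y z - (if z = 0 then 0 else Aform x y (z - 1))

def Fform (x y z v : ℕ) : ℤ :=
  if y = 0 ∧ x = z ∧ x < v / 2 - 2 then 1 else Bform x y z

/-! A word with an end-around burst of length `u = x + 2` is determined by the start `s` of its
gap of `g = v - u` zeros and by the `x` letters strictly inside the burst, which form an arbitrary
binary word whose zero runs are all shorter than `g`; conversely `u` and `s` are determined by
the word, since a second candidate gap would be a run of zeros of length `≥ g` inside the burst,
or would swallow one of the two ones bounding it. Hence the count is `v` times the number of
inner words, summed over `x`.

An inner word of length `x` with `y` ones and zero runs of length `≤ e = g - 1` is the same as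
the sequence of its `y + 1` zero runs, a composition of `x - y` into `y + 1` parts bounded by `e`.
Inclusion–exclusion over the parts exceeding `e` counts these as `A(x, y, e)`, and
`A(x, y, e) = ∑_{z ≤ e} B(x, y, z)` telescopes. Finally `F = B`: the special case of `F` is
`B(x, 0, x) = 1`. -/

open Finset

namespace Finset.Nat

theorem card_antidiagonalTuple (k m : ℕ) :
    #(antidiagonalTuple (k + 1) m) = (m + k).choose k := by
  rw [← piAntidiag_univ_fin_eq_antidiagonalTuple, ← map_sym_eq_piAntidiag, card_map, sym_univ,
    card_univ, Sym.card_sym_eq_choose, Fintype.card_fin, Nat.add_right_comm, Nat.add_sub_cancel,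
    add_comm, Nat.choose_symm_add]

theorem card_antidiagonalTuple_filter_le (k m e : ℕ) (J : Finset (Fin k)) :
    #((antidiagonalTuple k m).filter fun f => ∀ i ∈ J, e ≤ f i) =
      if #J * e ≤ m then #(antidiagonalTuple k (m - #J * e)) else 0 := by
  set c : Fin k → ℕ := fun i => if i ∈ J then e else 0
  have hc : ∑ i, c i = #J * e := by simp only [c, sum_ite_mem, univ_inter, sum_const, smul_eq_mul]
  have c_le {f : Fin k → ℕ} (hf : ∀ i ∈ J, e ≤ f i) : c ≤ f := fun i => by
    simp only [c]; split_ifs with hi; exacts [hf i hi, Nat.zero_le _]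
  split_ifs with h
  · refine card_nbij' (· - c) (· + c) ?_ ?_ ?_ ?_
    · intro f hf
      rw [mem_coe, mem_filter, mem_antidiagonalTuple] at hf
      rw [mem_coe, mem_antidiagonalTuple, ← hc, ← hf.1]
      exact sum_tsub_distrib _ fun i _ => c_le hf.2 i
    · intro g hg
      rw [mem_coe, mem_antidiagonalTuple] at hg
      rw [mem_coe, mem_filter, mem_antidiagonalTuple]
      refine ⟨by simp only [Pi.add_apply]; rw [sum_add_distrib, hg, hc]; omega, fun i hi => ?_⟩
      simp [c, hi]
    · intro f hf
      rw [mem_coe, mem_filter] at hf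
      exact tsub_add_cancel_of_le (c_le hf.2)
    · intro g _
      exact add_tsub_cancel_right g c
  · rw [card_eq_zero, filter_eq_empty_iff]
    intro f hf hJ
    rw [mem_antidiagonalTuple] at hf
    have := hc ▸ sum_le_sum fun i (_ : i ∈ univ) => c_le hJ i
    omega

end Finset.Nat

def boundedCompositions (k m e : ℕ) : Finset (Fin k → ℕ) :=
  (Nat.antidiagonalTuple k m).filter fun f => ∀ i, f i ≤ e

@[simp]
theorem mem_boundedCompositions {k m e : ℕ} {f : Fin k → ℕ} :
    f ∈ boundedCompositions k m e ↔ ∑ i, f i = m ∧ ∀ i, f i ≤ e := by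
  rw [boundedCompositions, mem_filter, Nat.mem_antidiagonalTuple]

theorem card_boundedCompositions_one (m e : ℕ) :
    #(boundedCompositions 1 m e) = if m ≤ e then 1 else 0 := by
  rw [boundedCompositions, Nat.antidiagonalTuple_one, filter_singleton]
  simp only [Fin.forall_fin_one, Matrix.cons_val_fin_one]
  split_ifs <;> rfl

theorem card_boundedCompositions_succ (k m e : ℕ) :
    #(boundedCompositions (k + 1) m e) =
      ∑ i ∈ range (min e m + 1), #(boundedCompositions k (m - i) e) := by
  rw [card_eq_sum_card_fiberwise (f := fun f => f 0) (t := range (min e m + 1))]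
  · refine sum_congr rfl fun i hi => card_nbij' Fin.tail (fun g => Fin.cons i g) ?_ ?_ ?_ ?_
    · intro f hf
      rw [mem_coe, mem_filter, mem_boundedCompositions] at hf
      obtain ⟨⟨hsum, hle⟩, rfl⟩ := hf
      rw [mem_coe, mem_boundedCompositions, ← hsum, Fin.sum_univ_succ, Nat.add_sub_cancel_left]
      exact ⟨rfl, fun j => hle j.succ⟩
    · intro g hg
      rw [mem_coe, mem_boundedCompositions] at hg
      rw [mem_range, Nat.lt_succ_iff, le_min_iff] at hi
      rw [mem_coe, mem_filter, mem_boundedCompositions, Fin.sum_cons, hg.1, Fin.forall_fin_succ]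
      exact ⟨⟨by omega, hi.1, hg.2⟩, rfl⟩
    · intro f hf
      rw [mem_coe, mem_filter] at hf
      rw [← hf.2]
      exact Fin.cons_self_tail f
    · intro g _
      exact Fin.tail_cons _ _
  · intro f hf
    rw [mem_coe, mem_boundedCompositions] at hf
    have : f 0 ≤ m := hf.1 ▸ single_le_sum (fun _ _ => Nat.zero_le _) (mem_univ 0)
    rw [mem_coe, mem_range, Nat.lt_succ_iff]
    exact le_min (hf.2 0) this

theorem card_boundedCompositions_eq_sum (y m e : ℕ) :
    (#(boundedCompositions (y + 1) m e) : ℤ) =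
      ∑ j ∈ range (y + 2), (-1 : ℤ) ^ j * (y + 1).choose j *
        (if j * (e + 1) ≤ m then (m - j * (e + 1) + y).choose y else 0 : ℕ) := by
  classical
  set atLeast : Finset (Fin (y + 1)) → Finset (Fin (y + 1) → ℕ) := fun J =>
    (Nat.antidiagonalTuple (y + 1) m).filter fun f => ∀ i ∈ J, e + 1 ≤ f i
  have indicator (f : Fin (y + 1) → ℕ) : (if ∀ i, f i ≤ e then 1 else 0 : ℤ) =
      ∑ J ∈ (univ.filter fun i => e < f i).powerset, (-1 : ℤ) ^ #J := by
    simp only [sum_powerset_neg_one_pow_card, filter_eq_empty_iff, mem_univ, not_lt, true_imp_iff]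
  calc (#(boundedCompositions (y + 1) m e) : ℤ)
      = ∑ f ∈ Nat.antidiagonalTuple (y + 1) m,
          ∑ J ∈ (univ.filter fun i => e < f i).powerset, (-1 : ℤ) ^ #J := by
        simp only [boundedCompositions, card_filter, Nat.cast_sum, Nat.cast_ite, Nat.cast_one,
          Nat.cast_zero, indicator]
    _ = ∑ J ∈ univ.powerset, (-1 : ℤ) ^ #J * #(atLeast J) := by
        rw [sum_comm' (t' := univ.powerset) (s' := atLeast)]
        · simp only [sum_const, nsmul_eq_mul, mul_comm]
        · simp only [atLeast, mem_filter, mem_powerset, subset_iff, mem_univ, true_and,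
            Nat.lt_iff_add_one_le]
          tauto
    _ = _ := by
        simp only [atLeast, Nat.card_antidiagonalTuple_filter_le, Nat.card_antidiagonalTuple]
        rw [sum_powerset_apply_card (fun j => (-1 : ℤ) ^ j *
          ((if j * (e + 1) ≤ m then (m - j * (e + 1) + y).choose y else 0 : ℕ) : ℤ)),
          card_univ, Fintype.card_fin]
        refine sum_congr rfl fun j _ => ?_
        rw [nsmul_eq_mul]
        ring

theorem Aform_add (m y e : ℕ) :
    Aform (m + y) y e =
      ∑ j ∈ range (y + 2), (-1 : ℤ) ^ j * (y + 1).choose j *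
        (if j * (e + 1) ≤ m then (m - j * (e + 1) + y).choose y else 0 : ℕ) := by
  rw [Aform, sum_filter]
  refine sum_congr rfl fun j _ => ?_
  by_cases hm : j * (e + 1) ≤ m
  · rw [if_pos hm, if_pos (by omega), Nat.sub_add_comm hm]
  · rw [if_neg hm, Nat.cast_zero, mul_zero]
    split_ifs with hmy
    · rw [Nat.choose_eq_zero_of_lt (n := m + y - j * (e + 1)) (by omega), Nat.cast_zero, mul_zero]
    · rfl

theorem card_boundedCompositions (y m e : ℕ) :
    (#(boundedCompositions (y + 1) m e) : ℤ) = Aform (m + y) y e := by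
  rw [card_boundedCompositions_eq_sum, Aform_add]

section ZeroRuns

variable {M : Type*} [Zero M] {n : ℕ}

def ZeroRunsLt (n g : ℕ) (t : Fin n → M) : Prop :=
  ∀ a L, (h : a + L ≤ n) → (∀ j (hj : j < L), t ⟨a + j, by omega⟩ = 0) → L < g

theorem ZeroRunsLt.pos {g : ℕ} {t : Fin n → M} (ht : ZeroRunsLt n g t) : 0 < g :=
  ht 0 0 (Nat.zero_le n) fun _ hj => absurd hj (Nat.not_lt_zero _)

def dropWord (k : ℕ) (t : Fin n → M) : Fin (n - k) → M :=
  fun j => t ⟨k + j, by omega⟩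

theorem zeroRunsLt_dropWord {g : ℕ} {t : Fin n → M} (ht : ZeroRunsLt n g t) (k : ℕ) :
    ZeroRunsLt (n - k) g (dropWord k t) := by
  intro a L hL hzero
  rcases Nat.eq_zero_or_pos L with rfl | hL0
  · exact ht.pos
  refine ht (k + a) L (by omega) fun j hj => ?_
  simpa only [dropWord, Nat.add_assoc] using hzero j hj

end ZeroRuns

section ConsRun

/-- The word `0^k 1 t` of length `n`. -/
def consRun (n k : ℕ) (t : Fin (n - (k + 1)) → ZMod 2) (i : Fin n) : ZMod 2 :=
  if h₁ : (i : ℕ) < k then 0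
  else if h₂ : (i : ℕ) = k then 1
  else t ⟨i - (k + 1), by omega⟩

variable {n k : ℕ} {t : Fin (n - (k + 1)) → ZMod 2}

theorem consRun_of_lt {i : Fin n} (hi : (i : ℕ) < k) : consRun n k t i = 0 := dif_pos hi

theorem consRun_self (hk : k < n) : consRun n k t ⟨k, hk⟩ = 1 := by
  simp [consRun]

theorem dropWord_consRun : dropWord (k + 1) (consRun n k t) = t := by
  funext j
  simp only [dropWord, consRun, Nat.add_sub_cancel_left]
  rw [dif_neg (by omega), dif_neg (by omega)]

theorem consRun_dropWord {t : Fin n → ZMod 2} (hk : k < n)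
    (hzero : ∀ i : Fin n, (i : ℕ) < k → t i = 0) (hone : t ⟨k, hk⟩ = 1) :
    consRun n k (dropWord (k + 1) t) = t := by
  funext i
  rcases lt_trichotomy (i : ℕ) k with hi | hi | hi
  · rw [consRun_of_lt hi, hzero i hi]
  · obtain rfl : i = ⟨k, hk⟩ := Fin.ext hi
    rw [consRun_self, hone]
  · simp only [consRun, dropWord, dif_neg (show ¬ (i : ℕ) < k by omega),
      dif_neg (show (i : ℕ) ≠ k by omega)]
    congr 1
    ext
    simp only
    omega

theorem hammingNorm_consRun (hk : k < n) : hammingNorm (consRun n k t) = hammingNorm t + 1 := by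
  let shift : Fin (n - (k + 1)) ↪ Fin n :=
    ⟨fun j => ⟨k + 1 + j, by omega⟩, fun j j' h => Fin.ext (by simpa using h)⟩
  have hsupp : (univ.filter fun i => consRun n k t i ≠ 0) =
      insert ⟨k, hk⟩ ((univ.filter fun j => t j ≠ 0).map shift) := by
    ext i
    simp only [mem_filter, mem_univ, true_and, mem_insert, mem_map]
    rcases lt_trichotomy (i : ℕ) k with hi | hi | hi
    · simp only [consRun_of_lt hi, ne_eq, not_true_eq_false, false_iff, not_or]
      refine ⟨fun h => by simp [h] at hi, fun ⟨j, _, hj⟩ => ?_⟩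
      have : k + 1 + (j : ℕ) = i := congrArg Fin.val hj
      omega
    · obtain rfl : i = ⟨k, hk⟩ := Fin.ext hi
      simp [consRun_self]
    · obtain ⟨j, rfl⟩ : ∃ j, shift j = i :=
        ⟨⟨i - (k + 1), by omega⟩, Fin.ext (show k + 1 + ((i : ℕ) - (k + 1)) = i by omega)⟩
      have hval : consRun n k t (shift j) = t j := congrFun dropWord_consRun j
      have hne : shift j ≠ ⟨k, hk⟩ := fun h => by simp [h] at hi
      simp [hval, hne, shift.injective.eq_iff]
  have hk_notMem : (⟨k, hk⟩ : Fin n) ∉ (univ.filter fun j => t j ≠ 0).map shift := by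
    rintro hmem
    obtain ⟨j, -, hj⟩ := mem_map.1 hmem
    have : k + 1 + (j : ℕ) = k := congrArg Fin.val hj
    omega
  rw [hammingNorm, hammingNorm, hsupp, card_insert_of_notMem hk_notMem, card_map]

theorem zeroRunsLt_consRun {g : ℕ} (hkg : k < g) (ht : ZeroRunsLt (n - (k + 1)) g t) :
    ZeroRunsLt n g (consRun n k t) := by
  intro a L hL hzero
  by_contra! hgL
  by_cases hak : a ≤ k
  · have hk : k < n := by omega
    have := hzero (k - a) (by omega)
    rw [show (⟨a + (k - a), _⟩ : Fin n) = ⟨k, hk⟩ from Fin.ext (by simp; omega),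
      consRun_self] at this
    exact one_ne_zero this
  · refine absurd (ht (a - (k + 1)) L (by omega) fun j hj => ?_) (by omega)
    calc t ⟨a - (k + 1) + j, _⟩ = consRun n k t ⟨k + 1 + (a - (k + 1) + j), by omega⟩ :=
          (congrFun dropWord_consRun _).symm
      _ = consRun n k t ⟨a + j, by omega⟩ := by congr 1; ext; simp only; omega
      _ = 0 := hzero j hj

theorem eq_of_consRun_eq {l : ℕ} {s : Fin (n - (l + 1)) → ZMod 2} (hk : k < n) (hl : l < n)
    (h : consRun n k t = consRun n l s) : k = l := by
  have key : ∀ {k l : ℕ} {t : Fin (n - (k + 1)) → ZMod 2} {s : Fin (n - (l + 1)) → ZMod 2}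
      (hk : k < n), k < l → consRun n k t ≠ consRun n l s := fun hk hkl h => by
    have := congrFun h ⟨_, hk⟩
    rw [consRun_self, consRun_of_lt hkl] at this
    exact one_ne_zero this
  rcases lt_trichotomy k l with hkl | hkl | hkl
  exacts [absurd h (key hk hkl), hkl, absurd h.symm (key hl hkl)]

end ConsRun

theorem exists_first_eq_one {n : ℕ} {t : Fin n → ZMod 2} (ht : t ≠ 0) :
    ∃ (k : ℕ) (hk : k < n),
      (∀ i : Fin n, (i : ℕ) < k → t i = 0) ∧ t ⟨k, hk⟩ = 1 := by
  obtain ⟨i, hi, hmin⟩ := (univ.filter fun i => t i ≠ 0).exists_min_image id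
    (by simpa [filter_nonempty_iff, funext_iff] using ht)
  rw [mem_filter] at hi
  refine ⟨i, i.isLt, fun j hj => ?_, Fin.eq_one_of_ne_zero _ hi.2⟩
  by_contra hj0
  exact absurd (hmin j (mem_filter.2 ⟨mem_univ _, hj0⟩)) (not_le.2 hj)

open Classical in
noncomputable def boundedRunWords (n y e : ℕ) : Finset (Fin n → ZMod 2) :=
  univ.filter fun t => hammingNorm t = y ∧ ZeroRunsLt n (e + 1) t

open Classical in
@[simp]
theorem mem_boundedRunWords {n y e : ℕ} {t : Fin n → ZMod 2} :
    t ∈ boundedRunWords n y e ↔ hammingNorm t = y ∧ ZeroRunsLt n (e + 1) t := by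
  rw [boundedRunWords, mem_filter, and_iff_right (mem_univ t)]

theorem card_boundedRunWords_zero (n e : ℕ) :
    #(boundedRunWords n 0 e) = if n ≤ e then 1 else 0 := by
  have : boundedRunWords n 0 e = if n ≤ e then {0} else ∅ := by
    ext t
    rw [mem_boundedRunWords, hammingNorm_eq_zero]
    split_ifs with h
    · rw [mem_singleton, and_iff_left_iff_imp]
      rintro rfl a L hL -
      omega
    · simp only [notMem_empty, iff_false, not_and]
      rintro rfl hrun
      exact h (Nat.lt_succ_iff.1 (hrun 0 n (by omega) fun _ _ => rfl))
  rw [this]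
  split_ifs <;> rfl

theorem exists_consRun_of_mem_boundedRunWords {n y e : ℕ} {t : Fin n → ZMod 2}
    (ht : t ∈ boundedRunWords n (y + 1) e) :
    ∃ k, k ≤ e ∧ k ≤ n - (y + 1) ∧
      dropWord (k + 1) t ∈ boundedRunWords (n - (k + 1)) y e ∧
      consRun n k (dropWord (k + 1) t) = t := by
  rw [mem_boundedRunWords] at ht
  obtain ⟨hnorm, hrun⟩ := ht
  obtain ⟨k, hk, hzero, hone⟩ :=
    exists_first_eq_one (t := t) (hammingNorm_ne_zero_iff.1 (by omega))
  have hcons := consRun_dropWord hk hzero hone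
  have hnorm' : hammingNorm (dropWord (k + 1) t) = y := by
    have := hammingNorm_consRun (t := dropWord (k + 1) t) hk
    rw [hcons] at this
    omega
  have hlen := hnorm' ▸ hammingNorm_le_card_fintype (x := dropWord (k + 1) t)
  rw [Fintype.card_fin] at hlen
  refine ⟨k, ?_, by omega, mem_boundedRunWords.2 ⟨hnorm', zeroRunsLt_dropWord hrun _⟩,
    hcons⟩
  exact Nat.lt_succ_iff.1 (hrun 0 k (by omega) fun j hj => hzero _ (by simpa using hj))

theorem card_boundedRunWords_succ {n y : ℕ} (e : ℕ) (hyn : y + 1 ≤ n) :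
    #(boundedRunWords n (y + 1) e) =
      ∑ k ∈ range (min e (n - (y + 1)) + 1), #(boundedRunWords (n - (k + 1)) y e) := by
  rw [← card_sigma]
  refine (card_bij (fun p _ => consRun n p.1 p.2) ?_ ?_ ?_).symm
  · rintro ⟨k, t⟩ hkt
    show consRun n k t ∈ boundedRunWords n (y + 1) e
    simp only [mem_sigma, mem_range, Nat.lt_succ_iff, le_min_iff, mem_boundedRunWords] at hkt
    obtain ⟨⟨hke, hkn⟩, hnorm, hrun⟩ := hkt
    rw [mem_boundedRunWords, hammingNorm_consRun (by omega), hnorm]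
    exact ⟨rfl, zeroRunsLt_consRun (by omega) hrun⟩
  · rintro ⟨k, t⟩ hkt ⟨l, s⟩ hls h
    simp only [mem_sigma, mem_range, Nat.lt_succ_iff, le_min_iff] at hkt hls
    replace h : consRun n k t = consRun n l s := h
    obtain rfl := eq_of_consRun_eq (by omega) (by omega) h
    rw [← dropWord_consRun (t := t), ← dropWord_consRun (t := s), h]
  · intro t ht
    obtain ⟨k, hke, hkn, hdrop, hcons⟩ := exists_consRun_of_mem_boundedRunWords ht
    refine ⟨⟨k, dropWord (k + 1) t⟩, ?_, hcons⟩
    rw [mem_sigma, mem_range, Nat.lt_succ_iff, le_min_iff]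
    exact ⟨⟨hke, hkn⟩, hdrop⟩

theorem card_boundedRunWords (m y e : ℕ) :
    #(boundedRunWords (m + y) y e) = #(boundedCompositions (y + 1) m e) := by
  induction y generalizing m with
  | zero => rw [card_boundedRunWords_zero, card_boundedCompositions_one]; rfl
  | succ y ih =>
    rw [card_boundedRunWords_succ e (by omega), card_boundedCompositions_succ,
      Nat.add_sub_cancel]
    refine sum_congr rfl fun k hk => ?_
    rw [mem_range, Nat.lt_succ_iff, le_min_iff] at hk
    rw [show m + (y + 1) - (k + 1) = m - k + y by omega, ih]

theorem sum_range_Bform (x y e : ℕ) : ∑ z ∈ range (e + 1), Bform x y z = Aform x y e := by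
  induction e with
  | zero => simp [Bform]
  | succ e ih => rw [sum_range_succ, ih, Bform, if_neg e.succ_ne_zero, Nat.add_sub_cancel]; ring

theorem Aform_zero (x e : ℕ) : Aform x 0 e = if x ≤ e then 1 else 0 := by
  have h := card_boundedCompositions 0 x e
  rw [card_boundedCompositions_one, Nat.add_zero] at h
  rw [← h]
  split_ifs <;> rfl

theorem Fform_eq_Bform (x y z v : ℕ) : Fform x y z v = Bform x y z := by
  rw [Fform, ite_eq_right_iff]
  rintro ⟨rfl, rfl, -⟩
  rcases Nat.eq_zero_or_pos x with rfl | hx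
  · simp [Bform, Aform_zero]
  · simp [Bform, Aform_zero, hx.ne', show ¬x ≤ x - 1 by omega]

open Classical in
theorem card_zeroRunsLt (x g : ℕ) :
    (#(univ.filter fun t : Fin x → ZMod 2 => ZeroRunsLt x g t) : ℤ) =
      ∑ y ∈ range (x + 1), ∑ z ∈ range g, Bform x y z := by
  rcases g with _ | e
  · rw [filter_false_of_mem fun t _ (ht : ZeroRunsLt x 0 t) => ht.pos.ne rfl]
    simp
  rw [card_eq_sum_card_fiberwise (f := hammingNorm) (t := range (x + 1))]
  · push_cast
    refine sum_congr rfl fun y hy => ?_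
    obtain ⟨m, rfl⟩ : ∃ m, x = m + y := ⟨x - y, by rw [mem_range] at hy; omega⟩
    rw [sum_range_Bform, ← card_boundedCompositions, ← card_boundedRunWords, boundedRunWords,
      filter_filter]
    simp only [and_comm]
  · intro t _
    rw [mem_coe, mem_range, Nat.lt_succ_iff]
    simpa using hammingNorm_le_card_fintype (x := t)

section Cyclic

variable {v : ℕ}

theorem cycIdx_val (s : Fin v) (j : ℕ) : (cycIdx s j : ℕ) = (s + j) % v := rfl

theorem cycIdx_cycIdx (s : Fin v) (a b : ℕ) : cycIdx (cycIdx s a) b = cycIdx s (a + b) :=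
  Fin.ext <| by simp only [cycIdx_val, Nat.mod_add_mod, Nat.add_assoc]

theorem cycIdx_zero (s : Fin v) : cycIdx s 0 = s :=
  Fin.ext <| Nat.mod_eq_of_lt s.isLt

theorem cycIdx_add_self (s : Fin v) (a : ℕ) : cycIdx s (a + v) = cycIdx s a :=
  Fin.ext <| by simp only [cycIdx_val, ← Nat.add_assoc, Nat.add_mod_right]

theorem cycIdx_sub (s p : Fin v) : cycIdx s (p - s : Fin v) = p :=
  Fin.ext <| by
    rw [cycIdx_val, Fin.val_sub, Nat.add_mod_mod, ← Nat.add_assoc, Nat.add_sub_cancel' s.isLt.le,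
      Nat.add_mod_left, Nat.mod_eq_of_lt p.isLt]

theorem val_cycIdx_sub (s : Fin v) {j : ℕ} (hj : j < v) :
    ((cycIdx s j - s : Fin v) : ℕ) = j := by
  rw [Fin.val_sub, cycIdx_val, Nat.add_mod_mod, ← Nat.add_assoc, Nat.sub_add_cancel s.isLt.le,
    Nat.add_mod_left, Nat.mod_eq_of_lt hj]

end Cyclic

section Bursts

variable {v : ℕ}

def IsBurstAt (v u : ℕ) (w : Fin v → ZMod 2) (s : Fin v) : Prop :=
  (∀ j, j < v - u → w (cycIdx s j) = 0) ∧
    w (cycIdx s (v - 1)) = 1 ∧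
    w (cycIdx s (v - u)) = 1 ∧
    (∀ a L, a + L ≤ u → (∀ j, j < L → w (cycIdx s (v - u + a + j)) = 0) → L < v - u)

theorem IsBurstAt.eq_of_gap_le {uA uB : ℕ} {w : Fin v → ZMod 2} {sA sB : Fin v}
    (hA : IsBurstAt v uA w sA) (hB : IsBurstAt v uB w sB) (huB : uB ≤ v)
    (hgap : v - uB ≤ v - uA) : sA = sB := by
  set r : ℕ := ((sA - sB : Fin v) : ℕ)
  have hrv : r < v := Fin.isLt _
  have hsA : sA = cycIdx sB r := (cycIdx_sub sB sA).symm
  have hA0 (j : ℕ) (hj : j < v - uA) : w (cycIdx sB (r + j)) = 0 := by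
    rw [← cycIdx_cycIdx, ← hsA]; exact hA.1 j hj
  rcases Nat.eq_zero_or_pos r with hr0 | hrpos
  · rw [hsA, hr0, cycIdx_zero]
  exfalso
  by_cases hrB : r < v - uB
  · -- the position just before `sA` lies in the gap of `sB`
    have h1 := hA.2.1
    rw [hsA, cycIdx_cycIdx, show r + (v - 1) = r - 1 + v by omega, cycIdx_add_self,
      hB.1 _ (by omega)] at h1
    exact zero_ne_one h1
  by_cases hwrap : r + (v - uA) ≤ v - 1
  · -- the gap of `sA` is a run of zeros inside the burst of `sB`
    have := hB.2.2.2 (r - (v - uB)) (v - uA) (by omega) fun j hj => by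
      rw [show v - uB + (r - (v - uB)) + j = r + j by omega]; exact hA0 j hj
    omega
  · -- the gap of `sA` covers the last position of `sB`'s burst
    have h0 := hA0 (v - 1 - r) (by omega)
    rw [show r + (v - 1 - r) = v - 1 by omega, hB.2.1] at h0
    exact one_ne_zero h0

theorem IsBurstAt.start_unique {u : ℕ} {w : Fin v → ZMod 2} {s₁ s₂ : Fin v}
    (h₁ : IsBurstAt v u w s₁) (h₂ : IsBurstAt v u w s₂) (hu : u ≤ v) : s₁ = s₂ :=
  h₁.eq_of_gap_le h₂ hu le_rfl

theorem IsEndAroundBurst.length_unique {u₁ u₂ : ℕ} {w : Fin v → ZMod 2}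
    (h₁ : IsEndAroundBurst v u₁ w) (h₂ : IsEndAroundBurst v u₂ w) : u₁ = u₂ := by
  obtain ⟨-, hu₁, s₁, hs₁ : IsBurstAt v u₁ w s₁⟩ := h₁
  obtain ⟨-, hu₂, s₂, hs₂ : IsBurstAt v u₂ w s₂⟩ := h₂
  have hs : s₁ = s₂ := by
    rcases le_total (v - u₂) (v - u₁) with hg | hg
    exacts [hs₁.eq_of_gap_le hs₂ (by omega) hg, (hs₂.eq_of_gap_le hs₁ (by omega) hg).symm]
  subst hs
  by_contra hne
  rcases Nat.lt_or_gt_of_ne hne with hlt | hlt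
  · have h0 := hs₁.1 (v - u₂) (by omega)
    rw [hs₂.2.2.1] at h0
    exact one_ne_zero h0
  · have h0 := hs₂.1 (v - u₁) (by omega)
    rw [hs₁.2.2.1] at h0
    exact one_ne_zero h0

end Bursts

section BurstWords

variable {x : ℕ}

/-- The word `0^g 1 t 1`, read at position `r` (and as `1` past its end). -/
def gapBurst (g : ℕ) (t : Fin x → ZMod 2) (r : ℕ) : ZMod 2 :=
  if r < g then 0 else if h : g < r ∧ r - (g + 1) < x then t ⟨r - (g + 1), h.2⟩ else 1

theorem gapBurst_of_lt {g r : ℕ} (t : Fin x → ZMod 2) (hr : r < g) : gapBurst g t r = 0 :=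
  if_pos hr

theorem gapBurst_self (g : ℕ) (t : Fin x → ZMod 2) : gapBurst g t g = 1 := by
  simp [gapBurst]

theorem gapBurst_last (g : ℕ) (t : Fin x → ZMod 2) : gapBurst g t (g + 1 + x) = 1 := by
  simp [gapBurst, show g ≤ g + 1 + x by omega]

theorem gapBurst_add (g : ℕ) (t : Fin x → ZMod 2) (k : Fin x) :
    gapBurst g t (g + 1 + k) = t k := by
  simp [gapBurst, show ¬ g + 1 + (k : ℕ) < g by omega, show g < g + 1 + (k : ℕ) by omega]

variable {v : ℕ}

def burstWord (g : ℕ) (s : Fin v) (t : Fin x → ZMod 2) (p : Fin v) : ZMod 2 :=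
  gapBurst g t (p - s : Fin v)

theorem burstWord_cycIdx (g : ℕ) (s : Fin v) (t : Fin x → ZMod 2) {r : ℕ} (hr : r < v) :
    burstWord g s t (cycIdx s r) = gapBurst g t r := by
  rw [burstWord, val_cycIdx_sub s hr]

theorem isBurstAt_burstWord (hv : x + 3 ≤ v) (s : Fin v) {t : Fin x → ZMod 2}
    (ht : ZeroRunsLt x (v - (x + 2)) t) :
    IsBurstAt v (x + 2) (burstWord (v - (x + 2)) s t) s := by
  set g := v - (x + 2)
  have hlast : burstWord g s t (cycIdx s (v - 1)) = 1 := by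
    rw [burstWord_cycIdx _ _ _ (by omega), show v - 1 = g + 1 + x by omega, gapBurst_last]
  have hfirst : burstWord g s t (cycIdx s g) = 1 := by
    rw [burstWord_cycIdx _ _ _ (by omega), gapBurst_self]
  refine ⟨fun j hj => by rw [burstWord_cycIdx _ _ _ (by omega), gapBurst_of_lt _ hj], hlast,
    hfirst, fun a L haL hzero => ?_⟩
  rcases Nat.eq_zero_or_pos L with rfl | hL
  · omega
  -- a run of zeros avoids both boundary ones, so it is a run of zeros of `t`
  have ha : 1 ≤ a := by
    by_contra! ha0
    have := hzero 0 hL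
    rw [show g + a + 0 = g by omega, hfirst] at this
    exact one_ne_zero this
  have haL' : a + L ≤ x + 1 := by
    by_contra! haL'
    have := hzero (L - 1) (by omega)
    rw [show g + a + (L - 1) = v - 1 by omega, hlast] at this
    exact one_ne_zero this
  refine ht (a - 1) L (by omega) fun j hj => ?_
  have := hzero j hj
  rwa [show g + a + j = g + 1 + (a - 1 + j) by omega, burstWord_cycIdx _ _ _ (by omega),
    gapBurst_add g t ⟨a - 1 + j, by omega⟩] at this

theorem burstWord_cycIdx_add (hv : x + 3 ≤ v) (s : Fin v) (t : Fin x → ZMod 2) (k : Fin x) :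
    burstWord (v - (x + 2)) s t (cycIdx s (v - (x + 2) + 1 + k)) = t k := by
  rw [burstWord_cycIdx _ _ _ (by omega), gapBurst_add]

theorem IsBurstAt.exists_eq_burstWord (hv : x + 3 ≤ v) {w : Fin v → ZMod 2} {s : Fin v}
    (hw : IsBurstAt v (x + 2) w s) :
    ∃ t : Fin x → ZMod 2, ZeroRunsLt x (v - (x + 2)) t ∧ burstWord (v - (x + 2)) s t = w := by
  set g := v - (x + 2)
  obtain ⟨hgap, hlast, hfirst, hruns⟩ := hw
  refine ⟨fun k => w (cycIdx s (g + 1 + k)), fun a L haL hzero => ?_, funext fun p => ?_⟩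
  · refine hruns (a + 1) L (by omega) fun j hj => ?_
    rw [show g + (a + 1) + j = g + 1 + (a + j) by omega]
    exact hzero j hj
  · obtain ⟨r, hr, rfl⟩ : ∃ r < v, cycIdx s r = p := ⟨_, Fin.isLt _, cycIdx_sub s p⟩
    rw [burstWord_cycIdx _ _ _ hr]
    rcases lt_trichotomy r g with hrg | rfl | hrg
    · rw [gapBurst_of_lt _ hrg, hgap r hrg]
    · rw [gapBurst_self, hfirst]
    · by_cases hrx : r < v - 1
      · obtain ⟨k, rfl⟩ : ∃ k : Fin x, g + 1 + k = r :=
          ⟨⟨r - (g + 1), by omega⟩, by simp; omega⟩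
        rw [gapBurst_add]
      · rw [show r = g + 1 + x by omega, gapBurst_last, ← hlast]
        congr 2
        omega

end BurstWords

open Classical in
theorem card_isEndAroundBurst (v x : ℕ) :
    #(univ.filter (IsEndAroundBurst v (x + 2))) =
      v * #(univ.filter fun t : Fin x → ZMod 2 => ZeroRunsLt x (v - (x + 2)) t) := by
  rcases lt_or_ge v (x + 3) with hv | hv
  · rw [filter_false_of_mem fun w _ (hw : IsEndAroundBurst v (x + 2) w) =>
        absurd hw.2.1 (by omega),
      filter_false_of_mem fun t _ (ht : ZeroRunsLt x (v - (x + 2)) t) =>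
        absurd ht.pos (by omega)]
    simp
  trans #((univ : Finset (Fin v)) ×ˢ univ.filter fun t : Fin x → ZMod 2 =>
    ZeroRunsLt x (v - (x + 2)) t)
  swap
  · rw [card_product, card_fin]
  refine (card_nbij (fun p => burstWord (v - (x + 2)) p.1 p.2) ?_ ?_ ?_).symm
  · rintro ⟨s, t⟩ hst
    rw [mem_coe, mem_product, mem_filter] at hst
    rw [mem_coe, mem_filter]
    exact ⟨mem_univ _, by omega, by omega, s, isBurstAt_burstWord hv s hst.2.2⟩
  · rintro ⟨s, t⟩ hst ⟨s', t'⟩ hst' h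
    rw [mem_coe, mem_product, mem_filter] at hst hst'
    replace h : burstWord (v - (x + 2)) s t = burstWord (v - (x + 2)) s' t' := h
    obtain rfl := (isBurstAt_burstWord hv s hst.2.2).start_unique
      (h ▸ isBurstAt_burstWord hv s' hst'.2.2) (by omega)
    refine Prod.ext rfl (funext fun k => ?_)
    change t k = t' k
    rw [← burstWord_cycIdx_add hv s t, h, burstWord_cycIdx_add hv]
  · intro w hw
    rw [mem_coe, mem_filter] at hw
    obtain ⟨-, -, -, s, hs : IsBurstAt v (x + 2) w s⟩ := hw
    obtain ⟨t, ht, rfl⟩ := hs.exists_eq_burstWord hv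
    exact ⟨(s, t), by simpa using ht, rfl⟩

theorem stmt3_general (v u : ℕ) :
    (Nat.card {w : Fin v → ZMod 2 //
        ∃ u', 2 ≤ u' ∧ u' ≤ u ∧ IsEndAroundBurst v u' w} : ℤ) =
      (v : ℤ) * ∑ x ∈ Finset.range (u - 1), ∑ y ∈ Finset.range (x + 1),
        ∑ z ∈ Finset.range (v - x - 2), Fform x y z v := by
  classical
  have hbursts : (univ.filter fun w => ∃ u', 2 ≤ u' ∧ u' ≤ u ∧ IsEndAroundBurst v u' w) =
      (range (u - 1)).biUnion fun x => univ.filter (IsEndAroundBurst v (x + 2)) := by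
    ext w
    simp only [mem_filter, mem_univ, true_and, mem_biUnion, mem_range]
    constructor
    · rintro ⟨u', hu', hu'u, hw⟩
      exact ⟨u' - 2, by omega, by rwa [Nat.sub_add_cancel hu']⟩
    · rintro ⟨x, hx, hw⟩
      exact ⟨x + 2, by omega, by omega, hw⟩
  have hdisj : (range (u - 1) : Set ℕ).PairwiseDisjoint
      fun x => univ.filter (IsEndAroundBurst v (x + 2)) := fun x _ x' _ hne =>
    disjoint_filter.2 fun w _ hw hw' => hne (Nat.add_right_cancel (hw.length_unique hw'))
  rw [Nat.card_eq_fintype_card, Fintype.card_subtype, hbursts, card_biUnion hdisj, Nat.cast_sum,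
    mul_sum]
  refine sum_congr rfl fun x _ => ?_
  rw [card_isEndAroundBurst, Nat.cast_mul, card_zeroRunsLt, Nat.sub_sub]
  simp only [Fform_eq_Bform]

/-- For `2 ≤ u ≤ v - 1`, the number of binary words `w : Fin v → ZMod 2` that are
end-around phased-burst errors of burst length `u'` with error-free gap `v - u'`
for some `2 ≤ u' ≤ u` equals `v · Σ_{x=0}^{u-2} Σ_{y=0}^{x} Σ_{z=0}^{v-x-3} F(x,y,z,v)`. -/
theorem stmt3 (v u : ℕ) (hu : 2 ≤ u) (huv : u ≤ v - 1) :
    (Nat.card {w : Fin v → ZMod 2 //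
        ∃ u', 2 ≤ u' ∧ u' ≤ u ∧ IsEndAroundBurst v u' w} : ℤ) =
      (v : ℤ) * ∑ x ∈ Finset.range (u - 1), ∑ y ∈ Finset.range (x + 1),
        ∑ z ∈ Finset.range (v - x - 2), Fform x y z v :=
  stmt3_general v u
end

section
/- Let t, v, M be natural numbers with n = t·v and 1 ≤ M ≤ t. Let C be a k-dimensional linear subspace of (ZMod 2)^n (with coordinates indexed by pairs (subblock index in Fin t, position in Fin v)). Let E be the set of vectors e ∈ (ZMod 2)^n such that at most M of the t subblocks of e are nonzero (with no restriction on the error pattern within a nonzero subblock). If distinct elements of E lie in distinct cosets of C (i.e., for all e₁ ≠ e₂ in E, e₁ − e₂ ∉ C), then 2^{n−k} ≥ Σ_{j=1}^{M} C(t, j) · (2^v − 1)^j + 1. -/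
/-! The error patterns with at most `M` nonzero subblocks are exactly the Hamming ball of
radius `M` in `(𝔽₂^v)^t`, viewed as words of length `t` over an alphabet of size `2^v`; this
ball has `∑_{j ≤ M} C(t, j) (2^v - 1)^j` elements. Correctability says that the ball injects
into the quotient by `C`, which has `2^(n - k)` elements. -/

/-- Error patterns with at most `M` nonzero subblocks (no restriction on the
error pattern within a nonzero subblock). -/
def MPBCFullErrors (t v M : ℕ) : Set (Fin t × Fin v → ZMod 2) :=
  {e | Nat.card {i : Fin t // (fun p => e (i, p)) ≠ 0} ≤ M}

open Finset

section HammingCount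

variable {ι β : Type*} [Fintype ι] [DecidableEq ι] [Fintype β] [DecidableEq β] [Zero β]

lemma card_filter_support_eq (S : Finset ι) :
    #{x : ι → β | ({i | x i ≠ 0} : Finset ι) = S} = (Fintype.card β - 1) ^ #S := by
  have hpi : ({x : ι → β | ({i | x i ≠ 0} : Finset ι) = S} : Finset _) =
      Fintype.piFinset fun i => if i ∈ S then univ.erase 0 else {0} := by
    ext x
    simp only [mem_filter, mem_univ, true_and, Fintype.mem_piFinset, Finset.ext_iff]
    refine forall_congr' fun i => ?_
    split_ifs with h <;> simp [h]
  rw [hpi, Fintype.card_piFinset]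
  simp only [apply_ite card, card_singleton, prod_ite_mem, univ_inter, prod_const,
    card_erase_of_mem (mem_univ _), card_univ]

lemma card_filter_hammingNorm_eq (j : ℕ) :
    #{x : ι → β | hammingNorm x = j} = (Fintype.card ι).choose j * (Fintype.card β - 1) ^ j := by
  rw [card_eq_sum_card_fiberwise (f := fun x : ι → β => ({i | x i ≠ 0} : Finset ι))
    (t := powersetCard j univ) (fun x hx => by simpa [hammingNorm] using hx)]
  have hfiber : ∀ S ∈ powersetCard j (univ : Finset ι),
      #{x ∈ ({x : ι → β | hammingNorm x = j} : Finset _) | ({i | x i ≠ 0} : Finset ι) = S} =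
        (Fintype.card β - 1) ^ j := fun S hS => by
    rw [mem_powersetCard_univ] at hS
    rw [filter_filter, ← hS, ← card_filter_support_eq]
    congr 1
    refine filter_congr fun x _ => ⟨And.right, fun h => ⟨by rw [hammingNorm, h], h⟩⟩
  rw [sum_congr rfl hfiber, sum_const, card_powersetCard, card_univ, smul_eq_mul]

lemma card_filter_hammingNorm_le (M : ℕ) :
    #{x : ι → β | hammingNorm x ≤ M} =
      ∑ j ∈ range (M + 1), (Fintype.card ι).choose j * (Fintype.card β - 1) ^ j := by
  rw [card_eq_sum_card_fiberwise (f := hammingNorm) (t := range (M + 1))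
    (fun x hx => by simpa [Nat.lt_succ_iff] using hx)]
  refine sum_congr rfl fun j hj => ?_
  rw [← card_filter_hammingNorm_eq, filter_filter]
  congr 1
  refine filter_congr fun x _ => ⟨And.right, fun h => ⟨?_, h⟩⟩
  rw [h]; simpa [Nat.lt_succ_iff] using hj

end HammingCount

lemma Submodule.natCard_le_natCard_quotient_of_sub_notMem {R V : Type*} [Ring R]
    [AddCommGroup V] [Module R V] (C : Submodule R V) [Finite (V ⧸ C)] {E : Set V}
    (hE : ∀ e₁ ∈ E, ∀ e₂ ∈ E, e₁ ≠ e₂ → e₁ - e₂ ∉ C) :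
    Nat.card E ≤ Nat.card (V ⧸ C) := by
  refine Nat.card_le_card_of_injective (fun e : E => C.mkQ e) fun e₁ e₂ h => ?_
  by_contra hne
  exact hE e₁ e₁.2 e₂ e₂.2 (Subtype.coe_ne_coe.mpr hne) ((Submodule.Quotient.eq C).mp h)

lemma Submodule.natCard_quotient {K V : Type*} [Field K] [AddCommGroup V] [Module K V]
    [Module.Finite K V] (C : Submodule K V) :
    Nat.card (V ⧸ C) = Nat.card K ^ (Module.finrank K V - Module.finrank K C) := by
  rw [Module.natCard_eq_pow_finrank (K := K), ← C.finrank_quotient_add_finrank, Nat.add_sub_cancel]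

lemma mem_MPBCFullErrors_iff {t v M : ℕ} {e : Fin t × Fin v → ZMod 2} :
    e ∈ MPBCFullErrors t v M ↔ hammingNorm (Function.curry e) ≤ M := by
  rw [MPBCFullErrors, Set.mem_ofPred_eq, Nat.card_eq_fintype_card, Fintype.card_subtype]
  rfl

lemma natCard_MPBCFullErrors (t v M : ℕ) :
    Nat.card (MPBCFullErrors t v M) = ∑ j ∈ range (M + 1), t.choose j * (2 ^ v - 1) ^ j := by
  have hcurry : MPBCFullErrors t v M ≃ {x : Fin t → Fin v → ZMod 2 // hammingNorm x ≤ M} :=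
    (Equiv.curry _ _ _).subtypeEquiv fun _ => mem_MPBCFullErrors_iff
  rw [Nat.card_congr hcurry, Nat.card_eq_fintype_card, Fintype.card_subtype,
    card_filter_hammingNorm_le]
  simp

theorem stmt6_general (t v M k : ℕ)
    (C : Submodule (ZMod 2) (Fin t × Fin v → ZMod 2))
    (hk : Module.finrank (ZMod 2) C = k)
    (hcorr : ∀ e₁ ∈ MPBCFullErrors t v M, ∀ e₂ ∈ MPBCFullErrors t v M,
      e₁ ≠ e₂ → e₁ - e₂ ∉ C) :
    (∑ j ∈ Finset.Icc 1 M, t.choose j * (2 ^ v - 1) ^ j) + 1 ≤ 2 ^ (t * v - k) := by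
  have hquot : Nat.card (_ ⧸ C) = 2 ^ (t * v - k) := by
    rw [C.natCard_quotient, hk]
    simp [Module.finrank_fintype_fun_eq_card]
  have hsum : ∑ j ∈ range (M + 1), t.choose j * (2 ^ v - 1) ^ j =
      ∑ j ∈ Icc 1 M, t.choose j * (2 ^ v - 1) ^ j + 1 := by
    rw [range_eq_Ico, sum_eq_sum_Ico_succ_bot (by omega : 0 < M + 1), zero_add,
      Ico_add_one_right_eq_Icc, add_comm]
    simp
  rw [← hquot, ← hsum, ← natCard_MPBCFullErrors]
  exact C.natCard_le_natCard_quotient_of_sub_notMem hcorr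

/-- If the `k`-dimensional code `C ≤ (ZMod 2)^(t·v)` corrects all error patterns with
at most `M` nonzero subblocks, then `2^(n-k) ≥ Σ_{j=1}^{M} C(t,j) · (2^v - 1)^j + 1`. -/
theorem stmt6 (t v M k : ℕ) (hM1 : 1 ≤ M) (hMt : M ≤ t)
    (C : Submodule (ZMod 2) (Fin t × Fin v → ZMod 2))
    (hk : Module.finrank (ZMod 2) C = k)
    (hcorr : ∀ e₁ ∈ MPBCFullErrors t v M, ∀ e₂ ∈ MPBCFullErrors t v M,
      e₁ ≠ e₂ → e₁ - e₂ ∉ C) :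
    (∑ j ∈ Finset.Icc 1 M, t.choose j * (2 ^ v - 1) ^ j) + 1 ≤ 2 ^ (t * v - k) :=
  stmt6_general t v M k C hk hcorr
end
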